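/- Cut rule: for events A, B, C with P(A∩B) > 0, the conjunction satisfies ⟦(C|(A∩B))∧(B|A)⟧(ω) = ⟦(B∩C)|A⟧(ω) for every ω ∈ Ω; moreover, if P(A∩B∩C) > 0, then the iterated conditional satisfies ⟦(C|A)|((B∩C)|A)⟧(ω) = 1 for every ω ∈ Ω. -/

import Mathlib

open MeasureTheory Set
open scoped Classical

noncomputable section

variable {Ω : Type*} [MeasurableSpace Ω]

/-- Indicator (with values in `ℝ`) of a set. -/
def ind (A : Set Ω) : Ω → ℝ := A.indicator 1

/-- Conditional probability `P(A|H) = P(A ∩ H)/P(H)`. -/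
def condProb (P : Measure Ω) (A H : Set Ω) : ℝ :=
  (P (A ∩ H)).toReal / (P H).toReal

/-- The (indicator of the) conditional event `A|H`,
`⟦A|H⟧ = 1_{A∩H} + P(A|H)·1_{Hᶜ}`. -/
def condEvent (P : Measure Ω) (A H : Set Ω) : Ω → ℝ :=
  fun ω => ind (A ∩ H) ω + condProb P A H * ind Hᶜ ω

/-- The prevision `z` of the conjunction `(A|H) ∧ (B|K)`:
`z = E[min(⟦A|H⟧, ⟦B|K⟧)·1_{H∪K}]/P(H∪K)`. -/
def conjPrev (P : Measure Ω) (A H B K : Set Ω) : ℝ :=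
  (∫ ω, min (condEvent P A H ω) (condEvent P B K ω) * ind (H ∪ K) ω ∂P) /
    (P (H ∪ K)).toReal

/-- The conjunction `⟦(A|H) ∧ (B|K)⟧ = min(⟦A|H⟧, ⟦B|K⟧)·1_{H∪K} + z·1_{(H∪K)ᶜ}`. -/
def conjCE (P : Measure Ω) (A H B K : Set Ω) : Ω → ℝ :=
  fun ω => min (condEvent P A H ω) (condEvent P B K ω) * ind (H ∪ K) ω
    + conjPrev P A H B K * ind (H ∪ K)ᶜ ω

/-- The iterated conditional `⟦(B|K)|(A|H)⟧ = ⟦(A|H)∧(B|K)⟧ + μ·(1 − ⟦A|H⟧)`,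
with `μ = z / P(A|H)`. -/
def iterCond (P : Measure Ω) (A H B K : Set Ω) : Ω → ℝ :=
  fun ω => conjCE P A H B K ω +
    (conjPrev P A H B K / condProb P A H) * (1 - condEvent P A H ω)

/-- Goodman–Nguyen logical implication between conditional events:
`A|H ⊑ B|K` iff `A∩H ⊆ B∩K` and `Bᶜ∩K ⊆ Aᶜ∩H`. -/
def GNle (A H B K : Set Ω) : Prop := A ∩ H ⊆ B ∩ K ∧ Bᶜ ∩ K ⊆ Aᶜ ∩ H

/-! Both parts come from one observation: if `H ⊆ K` and `B ∩ K ⊆ H`, then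
`min(⟦A|H⟧, ⟦B|K⟧)·1_K = 1_{A∩B∩K}`, because off `H` but on `K` the event `B` fails and
`⟦B|K⟧` vanishes. Integrating gives the prevision `P(A∩B|K)`, so the conjunction
`(A|H) ∧ (B|K)` is the conditional event `(A∩B)|K`. The conjunction `(C|(A∩B)) ∧ (B|A)` is of
this form, and so is `((B∩C)|A) ∧ (C|A)`, which therefore equals `(B∩C)|A`; the iterated
conditional is then `⟦(B∩C)|A⟧ + 1·(1 − ⟦(B∩C)|A⟧) = 1`. -/

section ConditionalEvents

variable {P : Measure Ω} {A H B K : Set Ω} {ω : Ω}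

lemma condProb_nonneg : 0 ≤ condProb P A H :=
  div_nonneg ENNReal.toReal_nonneg ENNReal.toReal_nonneg

lemma condProb_pos [IsFiniteMeasure P] (h : 0 < P (A ∩ H)) : 0 < condProb P A H :=
  div_pos (ENNReal.toReal_pos h.ne' (measure_ne_top P _))
    (ENNReal.toReal_pos (h.trans_le (measure_mono inter_subset_right)).ne' (measure_ne_top P _))

lemma condEvent_of_mem (hω : ω ∈ H) : condEvent P A H ω = ind A ω := by
  simp [condEvent, ind, indicator_apply, hω]

lemma condEvent_of_notMem (hω : ω ∉ H) : condEvent P A H ω = condProb P A H := by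
  simp [condEvent, ind, hω]

lemma min_condEvent_mul_ind_union (hHK : H ⊆ K) (hBK : B ∩ K ⊆ H) (ω : Ω) :
    min (condEvent P A H ω) (condEvent P B K ω) * ind (H ∪ K) ω = ind (A ∩ B ∩ K) ω := by
  rw [union_eq_right.mpr hHK]
  by_cases hK : ω ∈ K
  · by_cases hH : ω ∈ H
    · rw [condEvent_of_mem hH, condEvent_of_mem hK]
      by_cases hA : ω ∈ A <;> by_cases hB : ω ∈ B <;> simp [ind, hA, hB, hK]
    · have hB : ω ∉ B := fun hB => hH (hBK ⟨hB, hK⟩)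
      rw [condEvent_of_notMem hH, condEvent_of_mem hK]
      simp [ind, hB, hK, condProb_nonneg]
  · simp [ind, hK]

lemma conjPrev_eq_condProb (hHK : H ⊆ K) (hBK : B ∩ K ⊆ H) (hm : MeasurableSet (A ∩ B ∩ K)) :
    conjPrev P A H B K = condProb P (A ∩ B) K := by
  have hint : ∫ ω, ind (A ∩ B ∩ K) ω ∂P = (P (A ∩ B ∩ K)).toReal := by
    simpa [ind, measureReal_def] using integral_indicator_one (μ := P) hm
  rw [conjPrev, condProb, funext (min_condEvent_mul_ind_union hHK hBK), hint,
    union_eq_right.mpr hHK]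

theorem conjCE_eq_condEvent (hHK : H ⊆ K) (hBK : B ∩ K ⊆ H) (hm : MeasurableSet (A ∩ B ∩ K))
    (ω : Ω) : conjCE P A H B K ω = condEvent P (A ∩ B) K ω := by
  rw [conjCE, min_condEvent_mul_ind_union hHK hBK, conjPrev_eq_condProb hHK hBK hm,
    union_eq_right.mpr hHK, condEvent]

theorem iterCond_eq_one [IsFiniteMeasure P] (hAB : A ∩ H ⊆ B) (hm : MeasurableSet (A ∩ H))
    (hpos : 0 < P (A ∩ H)) (ω : Ω) : iterCond P A H B H ω = 1 := by
  have hABH : A ∩ B ∩ H = A ∩ H := by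
    rw [inter_right_comm, inter_eq_left.mpr hAB]
  have hm' : MeasurableSet (A ∩ B ∩ H) := hABH ▸ hm
  have hconj : conjCE P A H B H ω = condEvent P A H ω := by
    rw [conjCE_eq_condEvent subset_rfl inter_subset_right hm', condEvent, condEvent, condProb,
      condProb, hABH]
  have hprev : conjPrev P A H B H = condProb P A H := by
    rw [conjPrev_eq_condProb subset_rfl inter_subset_right hm', condProb, condProb, hABH]
  rw [iterCond, hconj, hprev, div_self (condProb_pos hpos).ne']
  ring

end ConditionalEvents

theorem cut_rule_general (P : Measure Ω) [IsProbabilityMeasure P]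
    (A B C : Set Ω)
    (hAm : MeasurableSet A) (hBm : MeasurableSet B) (hCm : MeasurableSet C) :
    (∀ ω, conjCE P C (A ∩ B) B A ω = condEvent P (B ∩ C) A ω) ∧
      (0 < P (A ∩ B ∩ C) → ∀ ω, iterCond P (B ∩ C) A C A ω = 1) := by
  have hBCA : B ∩ C ∩ A = A ∩ B ∩ C := by rw [inter_comm, inter_assoc]
  have hm : MeasurableSet (B ∩ C ∩ A) := (hBm.inter hCm).inter hAm
  refine ⟨fun ω => ?_, fun hABC ω => ?_⟩
  · rw [conjCE_eq_condEvent inter_subset_left (inter_comm B A).subset (inter_comm C B ▸ hm),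
      inter_comm C B]
  · exact iterCond_eq_one (inter_subset_left.trans inter_subset_right) hm (hBCA ▸ hABC) ω

/-- Cut rule: `⟦(C|(A∩B))∧(B|A)⟧ = ⟦(B∩C)|A⟧` pointwise; moreover, if
`P(A∩B∩C) > 0`, then `⟦(C|A)|((B∩C)|A)⟧` is constantly `1`. -/
theorem cut_rule (P : Measure Ω) [IsProbabilityMeasure P]
    (A B C : Set Ω)
    (hAm : MeasurableSet A) (hBm : MeasurableSet B) (hCm : MeasurableSet C)
    (hAB : 0 < P (A ∩ B)) :
    (∀ ω, conjCE P C (A ∩ B) B A ω = condEvent P (B ∩ C) A ω) ∧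
      (0 < P (A ∩ B ∩ C) → ∀ ω, iterCond P (B ∩ C) A C A ω = 1) :=
  cut_rule_general P A B C hAm hBm hCm

end
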